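/- arXiv:math/0610525 — 7 statements merged into one kernel-verified Lean document; each statement's English description precedes it below -/
import Mathlib

section
/- Let (λ_q)_{q≥0} be a sequence of complex numbers and n a nonnegative integer. Then ∏_{k=0}^{n-1} cos(λ_k) = 2^{-n} · Σ_{j=0}^{2^n - 1} cos(Σ_{q=0}^{n-1} σ_q(j)·λ_q). -/
/-- `sigma j q = 2 e_q(j) - 1`, where `j = ∑_q e_q(j) 2^q` is the binary
expansion of `j`. -/
noncomputable def sigma (j q : ℕ) : ℂ := 2 * ((j.testBit q).toNat : ℂ) - 1

theorem stmt_6 (lam : ℕ → ℂ) (n : ℕ) :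
    ∏ k ∈ Finset.range n, Complex.cos (lam k) =
      (2 : ℂ) ^ (-(n : ℤ)) *
        ∑ j ∈ Finset.range (2 ^ n),
          Complex.cos (∑ q ∈ Finset.range n, sigma j q * lam q) := by
  induction n with
  | zero => simp
  | succ n ih =>
    have hsplit : (2 : ℕ) ^ (n + 1) = 2 ^ n + 2 ^ n := by ring
    rw [Finset.prod_range_succ, ih, hsplit, Finset.sum_range_add]
    have key : ∀ j ∈ Finset.range (2 ^ n),
        Complex.cos (∑ q ∈ Finset.range (n + 1), sigma j q * lam q) +
          Complex.cos (∑ q ∈ Finset.range (n + 1), sigma (2 ^ n + j) q * lam q) =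
        2 * Complex.cos (∑ q ∈ Finset.range n, sigma j q * lam q) *
          Complex.cos (lam n) := by
      intro j hj
      rw [Finset.mem_range] at hj
      have h1 : ∑ q ∈ Finset.range (n + 1), sigma j q * lam q =
          ∑ q ∈ Finset.range n, sigma j q * lam q - lam n := by
        rw [Finset.sum_range_succ, sigma, Nat.testBit_lt_two_pow hj]
        simp; ring
      have h2 : ∑ q ∈ Finset.range (n + 1), sigma (2 ^ n + j) q * lam q =
          ∑ q ∈ Finset.range n, sigma j q * lam q + lam n := by
        rw [Finset.sum_range_succ, sigma, Nat.testBit_two_pow_add_eq,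
          Nat.testBit_lt_two_pow hj]
        have : ∀ q ∈ Finset.range n, sigma (2 ^ n + j) q * lam q = sigma j q * lam q := by
          intro q hq
          rw [Finset.mem_range] at hq
          rw [sigma, sigma, Nat.testBit_two_pow_add_gt hq]
        rw [Finset.sum_congr rfl this]
        simp; ring
      rw [h1, h2, Complex.cos_sub, Complex.cos_add]
      ring
    rw [← Finset.sum_add_distrib, Finset.sum_congr rfl key]
    have hpow : (2 : ℂ) ^ (-((n : ℕ) + 1 : ℤ)) = 2 ^ (-(n : ℤ)) * 2⁻¹ := by
      rw [← zpow_neg_one, ← zpow_add₀ (two_ne_zero (α := ℂ))]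
      congr 1; ring
    push_cast
    rw [hpow, Finset.mul_sum, Finset.mul_sum, Finset.sum_mul]
    exact Finset.sum_congr rfl fun j _ => by ring
end

section
/- Let (λ_q)_{q≥0} be a sequence of complex numbers and m a nonnegative integer. Then ∏_{k=0}^{2m-1} sinh(λ_k) = 2^{-2m} · Σ_{j=0}^{2^{2m} - 1} (-1)^{s(j)} · cosh(Σ_{q=0}^{2m-1} σ_q(j)·λ_q). -/
/-- `s j` is the sum of the binary digits of `j`. -/
def s (j : ℕ) : ℕ := (Nat.digits 2 j).sum

lemma s_zero : s 0 = 0 := by simp [s]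

lemma s_bit (j b : ℕ) (hb : b < 2) : s (2 * j + b) = s j + b := by
  rcases Nat.eq_zero_or_pos (2 * j + b) with h | h
  · have hj : j = 0 := by omega
    have hb0 : b = 0 := by omega
    simp [hj, hb0, s_zero]
  · unfold s
    rw [Nat.digits_def' (by norm_num : 1 < 2) h]
    have h1 : (2 * j + b) % 2 = b := by omega
    have h2 : (2 * j + b) / 2 = j := by omega
    rw [h1, h2, List.sum_cons]
    omega

lemma s_eq (n : ℕ) : ∀ j : ℕ, j < 2 ^ n →
    s j = ∑ q ∈ Finset.range n, (j.testBit q).toNat := by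
  induction n with
  | zero => intro j hj; interval_cases j; simp [s_zero]
  | succ n ih =>
    intro j hj
    have hj2 : j / 2 < 2 ^ n := by
      have : (2 : ℕ) ^ (n + 1) = 2 * 2 ^ n := by ring
      omega
    have hdecomp : j = 2 * (j / 2) + j % 2 := by omega
    rw [Finset.sum_range_succ']
    have h0 : (j.testBit 0).toNat = j % 2 := by
      rcases Nat.mod_two_eq_zero_or_one j with h | h <;> simp [Nat.testBit_zero, h]
    have hstep : ∀ q, j.testBit (q + 1) = (j / 2).testBit q := by
      intro q; exact Nat.testBit_add_one j q
    calc s j = s (2 * (j / 2) + j % 2) := by rw [← hdecomp]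
      _ = s (j / 2) + j % 2 := s_bit _ _ (Nat.mod_lt _ (by norm_num))
      _ = (∑ q ∈ Finset.range n, ((j / 2).testBit q).toNat) + (j.testBit 0).toNat := by
          rw [ih _ hj2, h0]
      _ = (∑ q ∈ Finset.range n, (j.testBit (q + 1)).toNat) + (j.testBit 0).toNat := by
          simp_rw [hstep]

lemma s_add_pow (n : ℕ) : ∀ j : ℕ, j < 2 ^ n → s (j + 2 ^ n) = s j + 1 := by
  induction n with
  | zero =>
    intro j hj; interval_cases j
    simp only [pow_zero, Nat.zero_add, s_zero]
    have : (1 : ℕ) = 2 * 0 + 1 := by norm_num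
    rw [this, s_bit 0 1 (by norm_num), s_zero]
  | succ n ih =>
    intro j hj
    have hj2 : j / 2 < 2 ^ n := by
      have : (2 : ℕ) ^ (n + 1) = 2 * 2 ^ n := by ring
      omega
    have hdecomp : j + 2 ^ (n + 1) = 2 * (j / 2 + 2 ^ n) + j % 2 := by
      have : (2 : ℕ) ^ (n + 1) = 2 * 2 ^ n := by ring
      omega
    rw [hdecomp, s_bit _ _ (Nat.mod_lt _ (by norm_num)), ih _ hj2]
    have hdecomp2 : j = 2 * (j / 2) + j % 2 := by omega
    conv_rhs => rw [hdecomp2, s_bit _ _ (Nat.mod_lt _ (by norm_num))]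
    ring

lemma sigma_of_lt (n j q : ℕ) (hj : j < 2 ^ n) (hq : q < n) :
    sigma (j + 2 ^ n) q = sigma j q := by
  unfold sigma
  have : (j + 2 ^ n).testBit q = j.testBit q := by
    have := Nat.testBit_two_pow_mul_add 1 hj q
    rw [mul_one, add_comm] at this
    rw [this, if_pos hq]
  rw [this]

lemma sigma_top_lo (n j : ℕ) (hj : j < 2 ^ n) : sigma j n = -1 := by
  unfold sigma
  rw [Nat.testBit_lt_two_pow hj]
  norm_num

lemma sigma_top_hi (n j : ℕ) (hj : j < 2 ^ n) : sigma (j + 2 ^ n) n = 1 := by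
  unfold sigma
  have : (j + 2 ^ n).testBit n = true := by
    have := Nat.testBit_two_pow_mul_add 1 hj n
    rw [mul_one, add_comm] at this
    simp at this
    exact this
  rw [this]
  norm_num

lemma key (lam : ℕ → ℂ) (n : ℕ) :
    (2 : ℂ) ^ n * ∏ k ∈ Finset.range n, Complex.sinh (lam k) =
      ∑ j ∈ Finset.range (2 ^ n),
        (-1 : ℂ) ^ (n + s j) *
          Complex.exp (∑ q ∈ Finset.range n, sigma j q * lam q) := by
  induction n with
  | zero => simp [s_zero]
  | succ n ih =>
    have hsplit : (2 : ℕ) ^ (n + 1) = 2 ^ n + 2 ^ n := by ring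
    rw [hsplit, Finset.sum_range_add]
    simp_rw [Nat.add_comm (2 ^ n)]
    have hterm : ∀ j ∈ Finset.range (2 ^ n),
        (-1 : ℂ) ^ (n + 1 + s j) *
            Complex.exp (∑ q ∈ Finset.range (n + 1), sigma j q * lam q) +
          (-1 : ℂ) ^ (n + 1 + s (j + 2 ^ n)) *
            Complex.exp (∑ q ∈ Finset.range (n + 1), sigma (j + 2 ^ n) q * lam q) =
        (2 * Complex.sinh (lam n)) *
          ((-1 : ℂ) ^ (n + s j) *
            Complex.exp (∑ q ∈ Finset.range n, sigma j q * lam q)) := by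
      intro j hj
      rw [Finset.mem_range] at hj
      rw [Finset.sum_range_succ, Finset.sum_range_succ]
      have hS : ∑ q ∈ Finset.range n, sigma (j + 2 ^ n) q * lam q =
          ∑ q ∈ Finset.range n, sigma j q * lam q :=
        Finset.sum_congr rfl fun q hq => by
          rw [sigma_of_lt n j q hj (Finset.mem_range.mp hq)]
      rw [hS, sigma_top_lo n j hj, sigma_top_hi n j hj, s_add_pow n j hj]
      have hp1 : (-1 : ℂ) ^ (n + 1 + s j) = -(-1 : ℂ) ^ (n + s j) := by
        rw [show n + 1 + s j = (n + s j) + 1 by ring, pow_succ]; ring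
      have hp2 : (-1 : ℂ) ^ (n + 1 + (s j + 1)) = (-1 : ℂ) ^ (n + s j) := by
        rw [show n + 1 + (s j + 1) = (n + s j) + 2 by ring, pow_add]; ring
      rw [hp1, hp2, Complex.exp_add, Complex.exp_add, Complex.sinh, neg_one_mul,
        one_mul, Complex.exp_neg]
      have he := Complex.exp_ne_zero (lam n)
      field_simp
      ring
    calc (2 : ℂ) ^ (n + 1) * ∏ k ∈ Finset.range (n + 1), Complex.sinh (lam k)
        = (2 * Complex.sinh (lam n)) *
            ((2 : ℂ) ^ n * ∏ k ∈ Finset.range n, Complex.sinh (lam k)) := by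
          rw [Finset.prod_range_succ]; ring
      _ = (2 * Complex.sinh (lam n)) *
            ∑ j ∈ Finset.range (2 ^ n), (-1 : ℂ) ^ (n + s j) *
              Complex.exp (∑ q ∈ Finset.range n, sigma j q * lam q) := by rw [ih]
      _ = ∑ j ∈ Finset.range (2 ^ n),
            ((-1 : ℂ) ^ (n + 1 + s j) *
              Complex.exp (∑ q ∈ Finset.range (n + 1), sigma j q * lam q) +
            (-1 : ℂ) ^ (n + 1 + s (j + 2 ^ n)) *
              Complex.exp (∑ q ∈ Finset.range (n + 1), sigma (j + 2 ^ n) q * lam q)) := by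
          rw [Finset.mul_sum]
          exact (Finset.sum_congr rfl hterm).symm
      _ = _ := by rw [Finset.sum_add_distrib]

lemma sigma_compl (n j q : ℕ) (hj : j < 2 ^ n) (hq : q < n) :
    sigma (2 ^ n - 1 - j) q = - sigma j q := by
  unfold sigma
  have h1 : 2 ^ n - 1 - j = 2 ^ n - (j + 1) := by omega
  rw [h1, Nat.testBit_two_pow_sub_succ hj q, decide_eq_true hq, Bool.true_and]
  cases j.testBit q <;> norm_num

lemma s_compl (n j : ℕ) (hj : j < 2 ^ n) : s (2 ^ n - 1 - j) + s j = n := by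
  have hj' : 2 ^ n - 1 - j < 2 ^ n := by
    have := Nat.one_le_two_pow (n := n); omega
  rw [s_eq n _ hj', s_eq n j hj, ← Finset.sum_add_distrib]
  have : ∀ q ∈ Finset.range n,
      ((2 ^ n - 1 - j).testBit q).toNat + (j.testBit q).toNat = 1 := by
    intro q hq
    have h1 : 2 ^ n - 1 - j = 2 ^ n - (j + 1) := by omega
    rw [h1, Nat.testBit_two_pow_sub_succ hj q,
      decide_eq_true (Finset.mem_range.mp hq), Bool.true_and]
    cases j.testBit q <;> simp
  rw [Finset.sum_congr rfl this, Finset.sum_const, Finset.card_range, smul_eq_mul, mul_one]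

theorem stmt_7 (lam : ℕ → ℂ) (m : ℕ) :
    ∏ k ∈ Finset.range (2 * m), Complex.sinh (lam k) =
      (2 : ℂ) ^ (-(2 * m : ℤ)) *
        ∑ j ∈ Finset.range (2 ^ (2 * m)),
          (-1 : ℂ) ^ s j *
            Complex.cosh (∑ q ∈ Finset.range (2 * m), sigma j q * lam q) := by
  set n := 2 * m with hn
  have hA : ∑ j ∈ Finset.range (2 ^ n), (-1 : ℂ) ^ s j *
      Complex.cosh (∑ q ∈ Finset.range n, sigma j q * lam q) =
      ∑ j ∈ Finset.range (2 ^ n), (-1 : ℂ) ^ s j *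
      Complex.exp (∑ q ∈ Finset.range n, sigma j q * lam q) := by
    have hB : ∑ j ∈ Finset.range (2 ^ n), (-1 : ℂ) ^ s j *
        Complex.exp (-∑ q ∈ Finset.range n, sigma j q * lam q) =
        ∑ j ∈ Finset.range (2 ^ n), (-1 : ℂ) ^ s j *
        Complex.exp (∑ q ∈ Finset.range n, sigma j q * lam q) := by
      apply Finset.sum_nbij' (i := fun j => 2 ^ n - 1 - j) (j := fun j => 2 ^ n - 1 - j)
      · intro j hj
        rw [Finset.mem_range] at hj ⊢
        have := Nat.one_le_two_pow (n := n); omega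
      · intro j hj
        rw [Finset.mem_range] at hj ⊢
        have := Nat.one_le_two_pow (n := n); omega
      · intro j hj
        rw [Finset.mem_range] at hj
        have := Nat.one_le_two_pow (n := n); omega
      · intro j hj
        rw [Finset.mem_range] at hj
        have := Nat.one_le_two_pow (n := n); omega
      · intro j hj
        rw [Finset.mem_range] at hj
        have hsum : ∑ q ∈ Finset.range n, sigma (2 ^ n - 1 - j) q * lam q =
            -∑ q ∈ Finset.range n, sigma j q * lam q := by
          rw [← Finset.sum_neg_distrib]
          refine Finset.sum_congr rfl fun q hq => ?_
          rw [sigma_compl n j q hj (Finset.mem_range.mp hq)]; ring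
        have hsign : (-1 : ℂ) ^ s (2 ^ n - 1 - j) = (-1 : ℂ) ^ s j := by
          have hc := s_compl n j hj
          have h1 : (-1 : ℂ) ^ (s (2 ^ n - 1 - j) + s j) = 1 := by
            rw [hc, hn, pow_mul]; norm_num
          have h2 : (-1 : ℂ) ^ s j * (-1 : ℂ) ^ s j = 1 := by
            rw [← pow_add, ← two_mul, pow_mul]; norm_num
          calc (-1 : ℂ) ^ s (2 ^ n - 1 - j)
              = (-1 : ℂ) ^ s (2 ^ n - 1 - j) * ((-1 : ℂ) ^ s j * (-1 : ℂ) ^ s j) := by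
                rw [h2, mul_one]
            _ = ((-1 : ℂ) ^ (s (2 ^ n - 1 - j) + s j)) * (-1 : ℂ) ^ s j := by
                rw [pow_add]; ring
            _ = (-1 : ℂ) ^ s j := by rw [h1, one_mul]
        rw [hsign, hsum]
    have hcosh : ∀ j : ℕ, (-1 : ℂ) ^ s j *
        Complex.cosh (∑ q ∈ Finset.range n, sigma j q * lam q) =
        ((-1 : ℂ) ^ s j * Complex.exp (∑ q ∈ Finset.range n, sigma j q * lam q) +
         (-1 : ℂ) ^ s j * Complex.exp (-∑ q ∈ Finset.range n, sigma j q * lam q)) / 2 := by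
      intro j
      rw [Complex.cosh]
      ring
    calc ∑ j ∈ Finset.range (2 ^ n), (-1 : ℂ) ^ s j *
          Complex.cosh (∑ q ∈ Finset.range n, sigma j q * lam q)
        = ((∑ j ∈ Finset.range (2 ^ n), (-1 : ℂ) ^ s j *
            Complex.exp (∑ q ∈ Finset.range n, sigma j q * lam q)) +
           (∑ j ∈ Finset.range (2 ^ n), (-1 : ℂ) ^ s j *
            Complex.exp (-∑ q ∈ Finset.range n, sigma j q * lam q))) / 2 := by
          rw [← Finset.sum_add_distrib, Finset.sum_div]
          exact Finset.sum_congr rfl fun j _ => hcosh j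
      _ = _ := by rw [hB]; ring
  have hkey := key lam n
  have hsign : ∀ j : ℕ, (-1 : ℂ) ^ (n + s j) = (-1 : ℂ) ^ s j := by
    intro j
    rw [pow_add, hn, pow_mul]
    norm_num
  simp_rw [hsign] at hkey
  rw [hA, show -(2 * m : ℤ) = -((n : ℕ) : ℤ) by rw [hn]; push_cast; ring,
    zpow_neg, zpow_natCast, ← hkey]
  rw [inv_mul_cancel_left₀ (pow_ne_zero n (two_ne_zero : (2:ℂ) ≠ 0))]
end

section
/- Let (λ_q)_{q≥0} be a sequence of complex numbers and m a nonnegative integer. Then ∏_{k=0}^{2m-1} sin(λ_k) = (-1)^m · 2^{-2m} · Σ_{j=0}^{2^{2m} - 1} (-1)^{s(j)} · cos(Σ_{q=0}^{2m-1} σ_q(j)·λ_q). -/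
open Finset Complex

lemma s_eq_sum_testBit {n j : ℕ} (hj : j < 2 ^ n) :
    s j = ∑ q ∈ range n, (j.testBit q).toNat := by
  induction n generalizing j with
  | zero => simp [Nat.lt_one_iff.mp (by simpa using hj), s]
  | succ n ih =>
    rcases Nat.eq_zero_or_pos j with rfl | hj0
    · simp [s]
    have hdiv : j / 2 < 2 ^ n := by rw [Nat.div_lt_iff_lt_mul two_pos, ← pow_succ]; exact hj
    have hs : s j = j % 2 + s (j / 2) := by
      rw [s, Nat.digits_def' one_lt_two hj0, List.sum_cons, s]
    rw [hs, ih hdiv, sum_range_succ']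
    have h0 : (j.testBit 0).toNat = j % 2 := by
      rcases Nat.mod_two_eq_zero_or_one j with h | h <;> simp [h]
    simp only [Nat.testBit_add_one, h0, add_comm]

lemma sigma_eq_neg_one_pow (j q : ℕ) : sigma j q = (-1) ^ (1 + (j.testBit q).toNat) := by
  cases h : j.testBit q <;> norm_num [sigma, h]

lemma neg_one_pow_s {n j : ℕ} (hj : j < 2 ^ n) :
    (-1 : ℂ) ^ s j = (-1) ^ n * ∏ q ∈ range n, sigma j q := by
  rw [prod_congr rfl fun q _ ↦ sigma_eq_neg_one_pow j q, prod_pow_eq_pow_sum, sum_add_distrib,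
    sum_const, card_range, smul_eq_mul, mul_one, ← s_eq_sum_testBit hj, ← pow_add, ← add_assoc,
    ← two_mul, pow_add, pow_mul, neg_one_sq, one_pow, one_mul]

lemma sigma_self_of_lt_two_pow {n j : ℕ} (hj : j < 2 ^ n) : sigma j n = -1 := by
  simp [sigma, Nat.testBit_lt_two_pow hj]

lemma sigma_two_pow_add_self {n j : ℕ} (hj : j < 2 ^ n) : sigma (2 ^ n + j) n = 1 := by
  rw [sigma, Nat.testBit_two_pow_add_eq, Nat.testBit_lt_two_pow hj]; norm_num

lemma sigma_two_pow_add_of_lt {n q : ℕ} (hq : q < n) (j : ℕ) : sigma (2 ^ n + j) q = sigma j q := by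
  rw [sigma, Nat.testBit_two_pow_add_gt hq]; rfl

lemma sigma_xor_two_pow_sub_one {n q : ℕ} (hq : q < n) (j : ℕ) :
    sigma (j ^^^ (2 ^ n - 1)) q = -sigma j q := by
  rw [sigma, sigma, Nat.testBit_xor, Nat.testBit_two_pow_sub_one, decide_eq_true hq]
  cases j.testBit q <;> norm_num

lemma sum_range_two_pow_comp_xor {M : Type*} [AddCommMonoid M] (n : ℕ) (f : ℕ → M) :
    ∑ j ∈ range (2 ^ n), f (j ^^^ (2 ^ n - 1)) = ∑ j ∈ range (2 ^ n), f j := by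
  have hmask : 2 ^ n - 1 < 2 ^ n := Nat.sub_one_lt (by positivity)
  refine sum_nbij' (· ^^^ (2 ^ n - 1)) (· ^^^ (2 ^ n - 1)) ?_ ?_ ?_ ?_ (fun _ _ ↦ rfl) <;>
    intro j hj
  · exact mem_range.mpr (Nat.xor_lt_two_pow (mem_range.mp hj) hmask)
  · exact mem_range.mpr (Nat.xor_lt_two_pow (mem_range.mp hj) hmask)
  · simp
  · simp

lemma sin_eq_exp_sub_exp (z : ℂ) : sin z = (2 * I)⁻¹ * (exp (z * I) - exp (-z * I)) := by
  rw [eq_inv_mul_iff_mul_eq₀ (mul_ne_zero two_ne_zero I_ne_zero), mul_comm 2, mul_assoc, two_sin]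
  linear_combination (exp (-z * I) - exp (z * I)) * I_mul_I

lemma prod_sin_eq_sum_exp (lam : ℕ → ℂ) (n : ℕ) :
    ∏ k ∈ range n, sin (lam k) = (2 * I)⁻¹ ^ n *
      ∑ j ∈ range (2 ^ n), (∏ q ∈ range n, sigma j q) *
        exp ((∑ q ∈ range n, sigma j q * lam q) * I) := by
  induction n with
  | zero => simp
  | succ n ih =>
    have low : ∀ j ∈ range (2 ^ n),
        (∏ q ∈ range (n + 1), sigma j q) * exp ((∑ q ∈ range (n + 1), sigma j q * lam q) * I) =
          -((∏ q ∈ range n, sigma j q) * exp ((∑ q ∈ range n, sigma j q * lam q) * I)) *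
            exp (-lam n * I) := by
      intro j hj
      rw [prod_range_succ, sum_range_succ, sigma_self_of_lt_two_pow (mem_range.mp hj), neg_one_mul,
        add_mul, exp_add]
      ring
    have high : ∀ j ∈ range (2 ^ n),
        (∏ q ∈ range (n + 1), sigma (2 ^ n + j) q) *
            exp ((∑ q ∈ range (n + 1), sigma (2 ^ n + j) q * lam q) * I) =
          (∏ q ∈ range n, sigma j q) * exp ((∑ q ∈ range n, sigma j q * lam q) * I) *
            exp (lam n * I) := by
      intro j hj
      have hlow : ∀ q ∈ range n, sigma (2 ^ n + j) q = sigma j q :=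
        fun q hq ↦ sigma_two_pow_add_of_lt (mem_range.mp hq) j
      rw [prod_range_succ, sum_range_succ, sigma_two_pow_add_self (mem_range.mp hj),
        prod_congr rfl hlow, sum_congr rfl fun q hq ↦ by rw [hlow q hq], one_mul, add_mul, exp_add]
      ring
    rw [prod_range_succ, ih, sin_eq_exp_sub_exp, pow_succ', Nat.pow_succ', Nat.two_mul, sum_range_add,
      sum_congr rfl low, sum_congr rfl high, ← sum_mul, ← sum_mul, sum_neg_distrib]
    ring

lemma prod_sin_eq_sum_cos (lam : ℕ → ℂ) {n : ℕ} (hn : Even n) :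
    ∏ k ∈ range n, sin (lam k) = (2 * I)⁻¹ ^ n *
      ∑ j ∈ range (2 ^ n), (∏ q ∈ range n, sigma j q) * cos (∑ q ∈ range n, sigma j q * lam q) := by
  set E : ℕ → ℂ := fun j ↦ (∏ q ∈ range n, sigma j q) * exp ((∑ q ∈ range n, sigma j q * lam q) * I)
  have mirror : ∀ j, E (j ^^^ (2 ^ n - 1)) =
      (∏ q ∈ range n, sigma j q) * exp (-(∑ q ∈ range n, sigma j q * lam q) * I) := by
    intro j
    have hflip : ∀ q ∈ range n, sigma (j ^^^ (2 ^ n - 1)) q = -sigma j q :=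
      fun q hq ↦ sigma_xor_two_pow_sub_one (mem_range.mp hq) j
    have hexp : ∑ q ∈ range n, sigma (j ^^^ (2 ^ n - 1)) q * lam q =
        -∑ q ∈ range n, sigma j q * lam q := by
      rw [← sum_neg_distrib]
      exact sum_congr rfl fun q hq ↦ by rw [hflip q hq, neg_mul]
    simp only [E, prod_congr rfl hflip, hexp, prod_neg, card_range, hn.neg_one_pow, one_mul]
  have hsum : ∑ j ∈ range (2 ^ n), E j = ∑ j ∈ range (2 ^ n), (E j + E (j ^^^ (2 ^ n - 1))) / 2 := by
    rw [← sum_div, sum_add_distrib, sum_range_two_pow_comp_xor n E]; ring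
  rw [prod_sin_eq_sum_exp, hsum]
  congr 1
  refine sum_congr rfl fun j _ ↦ ?_
  rw [mirror, cos]
  ring

theorem stmt_8 (lam : ℕ → ℂ) (m : ℕ) :
    ∏ k ∈ Finset.range (2 * m), Complex.sin (lam k) =
      (-1 : ℂ) ^ m * (2 : ℂ) ^ (-(2 * m : ℤ)) *
        ∑ j ∈ Finset.range (2 ^ (2 * m)),
          (-1 : ℂ) ^ s j *
            Complex.cos (∑ q ∈ Finset.range (2 * m), sigma j q * lam q) := by
  have hconst : (2 * I)⁻¹ ^ (2 * m) = (-1 : ℂ) ^ m * (2 : ℂ) ^ (-(2 * m : ℤ)) := by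
    have h2 : (2 : ℂ) ^ (-(2 * m : ℤ)) = ((2 : ℂ) ^ (2 * m))⁻¹ := by
      rw [zpow_neg]; norm_cast
    rw [h2, inv_pow, mul_pow, pow_mul I, I_sq, mul_inv, mul_comm, ← inv_pow (-1 : ℂ) m, inv_neg,
      inv_one]
  have hsign : ∀ j ∈ range (2 ^ (2 * m)), (-1 : ℂ) ^ s j = ∏ q ∈ range (2 * m), sigma j q :=
    fun j hj ↦ by rw [neg_one_pow_s (mem_range.mp hj), (even_two_mul m).neg_one_pow, one_mul]
  rw [prod_sin_eq_sum_cos lam (even_two_mul m), hconst]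
  exact congrArg _ (sum_congr rfl fun j hj ↦ by rw [hsign j hj])
end

section
/- For every real number x and every nonnegative integer n, ∏_{k=0}^{n-1} cos(2^k·x) = 2^{-n} · Σ_{j=0}^{2^n - 1} cos((2j+1)·x - 2^n·x). -/
theorem stmt_10 (x : ℝ) (n : ℕ) :
    ∏ k ∈ Finset.range n, Real.cos (2 ^ k * x) =
      (2 : ℝ) ^ (-(n : ℤ)) *
        ∑ j ∈ Finset.range (2 ^ n),
          Real.cos ((2 * (j : ℝ) + 1) * x - 2 ^ n * x) := by
  have prod2sum : ∀ a b : ℝ, Real.cos a * Real.cos b =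
      (Real.cos (a - b) + Real.cos (a + b)) / 2 := by
    intro a b
    rw [Real.cos_sub, Real.cos_add]; ring
  induction n with
  | zero => simp
  | succ n ih =>
    rw [Finset.prod_range_succ, ih]
    have hpow : (2:ℕ) ^ (n + 1) = 2 ^ n + 2 ^ n := by ring
    rw [hpow, Finset.sum_range_add]
    have key : ∀ j ∈ Finset.range (2 ^ n),
        Real.cos ((2 * (j : ℝ) + 1) * x - 2 ^ n * x) * Real.cos (2 ^ n * x) =
        (Real.cos ((2 * (j : ℝ) + 1) * x - 2 ^ (n+1) * x) +
          Real.cos ((2 * ((2^n + j : ℕ) : ℝ) + 1) * x - 2 ^ (n+1) * x)) / 2 := by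
      intro j _
      have h1 : ((2 * (j : ℝ) + 1) * x - 2 ^ (n+1) * x) =
          ((2 * (j : ℝ) + 1) * x - 2 ^ n * x) - 2 ^ n * x := by ring
      have h2 : ((2 * ((2^n + j : ℕ) : ℝ) + 1) * x - 2 ^ (n+1) * x) =
          ((2 * (j : ℝ) + 1) * x - 2 ^ n * x) + 2 ^ n * x := by
        push_cast; ring
      rw [h1, h2, prod2sum]
    calc (2:ℝ) ^ (-(n:ℤ)) * (∑ j ∈ Finset.range (2 ^ n),
            Real.cos ((2 * (j : ℝ) + 1) * x - 2 ^ n * x)) * Real.cos (2 ^ n * x)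
        = (2:ℝ) ^ (-(n:ℤ)) * ∑ j ∈ Finset.range (2 ^ n),
            Real.cos ((2 * (j : ℝ) + 1) * x - 2 ^ n * x) * Real.cos (2 ^ n * x) := by
          rw [mul_assoc, Finset.sum_mul]
      _ = (2:ℝ) ^ (-(n:ℤ)) * ∑ j ∈ Finset.range (2 ^ n),
            (Real.cos ((2 * (j : ℝ) + 1) * x - 2 ^ (n+1) * x) +
              Real.cos ((2 * ((2^n + j : ℕ) : ℝ) + 1) * x - 2 ^ (n+1) * x)) / 2 := by
          rw [Finset.sum_congr rfl key]
      _ = (2:ℝ) ^ (-((n:ℤ)+1)) *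
            ((∑ j ∈ Finset.range (2 ^ n),
              Real.cos ((2 * (j : ℝ) + 1) * x - 2 ^ (n+1) * x)) +
             ∑ j ∈ Finset.range (2 ^ n),
              Real.cos ((2 * ((2^n + j : ℕ) : ℝ) + 1) * x - 2 ^ (n+1) * x)) := by
          rw [← Finset.sum_div, Finset.sum_add_distrib]
          have h3 : (2:ℝ) ^ (-((n:ℤ)+1)) = 2 ^ (-(n:ℤ)) / 2 := by
            rw [neg_add, zpow_add₀ (two_ne_zero : (2:ℝ) ≠ 0)]; norm_num; ring
          rw [h3]; ring
      _ = _ := by norm_cast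
end

section
/- (Wallis formula) As n tends to infinity, 2^{4n} / (n · C(2n, n)^2) tends to π, where C(2n, n) denotes the central binomial coefficient. -/
open scoped Real

/-! The sequence equals `W n * ((2n + 1) / n)`, where `W n` is the `n`-th partial Wallis product,
which tends to `π / 2`, while `(2n + 1) / n → 2`. -/

open Filter Topology Real.Wallis

lemma Real.Wallis.W_eq_choose_ratio (n : ℕ) :
    W n = 2 ^ (4 * n) / ((Nat.choose (2 * n) n : ℝ) ^ 2 * (2 * n + 1)) := by
  have hfact : (Nat.choose (2 * n) n : ℝ) * n.factorial * n.factorial = (2 * n).factorial := by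
    exact_mod_cast two_mul n ▸ Nat.add_choose_mul_factorial_mul_factorial n n
  rw [W_eq_factorial_ratio, ← hfact]
  have hfact_ne : (n.factorial : ℝ) ≠ 0 := by positivity
  field_simp

lemma tendsto_two_mul_add_one_div_self :
    Tendsto (fun n : ℕ => (2 * (n : ℝ) + 1) / n) atTop (𝓝 2) := by
  have h : Tendsto (fun n : ℕ => 2 + 1 / (n : ℝ)) atTop (𝓝 (2 + 0)) :=
    tendsto_one_div_atTop_nhds_zero_nat.const_add 2
  rw [add_zero] at h
  refine h.congr' ?_
  filter_upwards [eventually_ne_atTop 0] with n hn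
  field_simp

theorem stmt_15 :
    Filter.Tendsto
      (fun n : ℕ => (2 : ℝ) ^ (4 * n) / ((n : ℝ) * (Nat.choose (2 * n) n : ℝ) ^ 2))
      Filter.atTop (nhds π) := by
  have h : Tendsto (fun n : ℕ => W n * ((2 * (n : ℝ) + 1) / n)) atTop (𝓝 (π / 2 * 2)) :=
    tendsto_W_nhds_pi_div_two.mul tendsto_two_mul_add_one_div_self
  rw [div_mul_cancel₀ _ two_ne_zero] at h
  refine h.congr' ?_
  filter_upwards [eventually_ne_atTop 0] with n hn
  rw [W_eq_choose_ratio]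
  have hchoose : (Nat.choose (2 * n) n : ℝ) ≠ 0 := by
    exact_mod_cast (Nat.choose_pos (Nat.le_mul_of_pos_left n two_pos)).ne'
  field_simp
end

section
/- Let n be a nonnegative integer and let j be an integer with 0 ≤ j < 2^n. Then for every real x in the open interval (jπ/2^n, (j+1)π/2^n), the product P_n(x) := ∏_{k=0}^{n} sin(2^k·x) is nonzero and its sign equals (-1)^{s(j)}; in other words, the sequence of consecutive signs of P_n on (0, π) is the prefix of length 2^n of the Prouhet–Thue–Morse sequence ((-1)^{s(j)})_{j≥0}. -/
open scoped Real

lemma s_rec (j : ℕ) : s j = j % 2 + s (j / 2) := by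
  rcases Nat.eq_zero_or_pos j with h | h
  · simp [h, s]
  · unfold s
    rw [Nat.digits_def' (by norm_num) h]
    simp

lemma sign_mul' {a b : ℝ} (ha : a ≠ 0) (hb : b ≠ 0) :
    Real.sign (a * b) = Real.sign a * Real.sign b := by
  rcases ha.lt_or_gt with ha' | ha' <;> rcases hb.lt_or_gt with hb' | hb'
  · rw [Real.sign_of_pos (mul_pos_of_neg_of_neg ha' hb'), Real.sign_of_neg ha',
      Real.sign_of_neg hb']; norm_num
  · rw [Real.sign_of_neg (mul_neg_of_neg_of_pos ha' hb'), Real.sign_of_neg ha',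
      Real.sign_of_pos hb']; norm_num
  · rw [Real.sign_of_neg (mul_neg_of_pos_of_neg ha' hb'), Real.sign_of_pos ha',
      Real.sign_of_neg hb']; norm_num
  · rw [Real.sign_of_pos (mul_pos ha' hb'), Real.sign_of_pos ha',
      Real.sign_of_pos hb']; norm_num

theorem stmt_17 (n : ℕ) (j : ℕ) (hj : j < 2 ^ n) (x : ℝ)
    (hx : x ∈ Set.Ioo ((j : ℝ) * π / 2 ^ n) (((j : ℝ) + 1) * π / 2 ^ n)) :
    (∏ k ∈ Finset.range (n + 1), Real.sin (2 ^ k * x)) ≠ 0 ∧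
      Real.sign (∏ k ∈ Finset.range (n + 1), Real.sin (2 ^ k * x)) =
        (-1 : ℝ) ^ s j := by
  induction n generalizing j x with
  | zero =>
    interval_cases j
    obtain ⟨hx1, hx2⟩ := hx
    simp only [Nat.cast_zero, zero_mul, zero_div, zero_add, one_mul, pow_zero] at hx1 hx2 ⊢
    have hs : 0 < Real.sin x := Real.sin_pos_of_pos_of_lt_pi hx1 (by linarith)
    simp only [Finset.prod_range_one, pow_zero, one_mul]
    exact ⟨hs.ne', by rw [Real.sign_of_pos hs, s]; simp⟩
  | succ n ih =>
    obtain ⟨hx1, hx2⟩ := hx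
    have hpi := Real.pi_pos
    have h2n : (0 : ℝ) < 2 ^ n := by positivity
    -- bounds on the half index
    set m := j / 2 with hm
    have hjm : j = 2 * m + j % 2 := (Nat.div_add_mod j 2).symm.trans (by ring)
    have hmlt : m < 2 ^ n := Nat.div_lt_of_lt_mul (by
      rw [pow_succ] at hj; omega)
    have hb : j % 2 < 2 := Nat.mod_lt _ (by norm_num)
    -- x is in the interval for n, m
    have hxm : x ∈ Set.Ioo ((m : ℝ) * π / 2 ^ n) (((m : ℝ) + 1) * π / 2 ^ n) := by
      have h1n : 2 * m ≤ j := by omega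
      have h1 : (2 * m : ℝ) ≤ j := by exact_mod_cast h1n
      have h2n' : j + 1 ≤ 2 * m + 2 := by omega
      have h2 : (j : ℝ) + 1 ≤ 2 * m + 2 := by exact_mod_cast h2n'
      constructor
      · refine lt_of_le_of_lt ?_ hx1
        rw [div_le_div_iff₀ h2n (by positivity), pow_succ]
        nlinarith [mul_nonneg (mul_nonneg (sub_nonneg.mpr h1) hpi.le) h2n.le]
      · refine lt_of_lt_of_le hx2 ?_
        rw [div_le_div_iff₀ (by positivity) h2n, pow_succ]
        nlinarith [mul_nonneg (mul_nonneg (sub_nonneg.mpr h2) hpi.le) h2n.le]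
    obtain ⟨hP, hsP⟩ := ih m hmlt x hxm
    -- the new factor
    have harg : 2 ^ (n + 1) * x - j * π ∈ Set.Ioo (0 : ℝ) π := by
      constructor
      · have := (div_lt_iff₀ (by positivity : (0:ℝ) < 2 ^ (n+1))).mp hx1
        nlinarith
      · have := (lt_div_iff₀ (by positivity : (0:ℝ) < 2 ^ (n+1))).mp hx2
        nlinarith
    have hsin : Real.sin (2 ^ (n + 1) * x) = (-1) ^ j * Real.sin (2 ^ (n + 1) * x - j * π) := by
      have := Real.sin_add_nat_mul_pi (2 ^ (n + 1) * x - j * π) j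
      rw [sub_add_cancel] at this
      rw [this]
    have hpos : 0 < Real.sin (2 ^ (n + 1) * x - j * π) :=
      Real.sin_pos_of_pos_of_lt_pi harg.1 harg.2
    have hsignf : Real.sign (Real.sin (2 ^ (n + 1) * x)) = (-1 : ℝ) ^ j := by
      rw [hsin]
      rcases Nat.even_or_odd j with he | ho
      · rw [he.neg_one_pow]
        simpa [Real.sign_of_pos hpos] using (Real.sign_of_pos (by simpa using hpos) : _)
      · rw [ho.neg_one_pow]
        simp only [neg_one_mul]
        rw [Real.sign_of_neg (by linarith)]
    have hfne : Real.sin (2 ^ (n + 1) * x) ≠ 0 := by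
      rw [hsin]
      rcases Nat.even_or_odd j with he | ho
      · rw [he.neg_one_pow]; simpa using hpos.ne'
      · rw [ho.neg_one_pow]; simp; linarith
    rw [Finset.prod_range_succ]
    refine ⟨mul_ne_zero hP hfne, ?_⟩
    rw [sign_mul' hP hfne, hsP, hsignf]
    rw [s_rec j, ← hm, pow_add, mul_comm]
    congr 1
    conv_lhs => rw [hjm]
    rw [pow_add, pow_mul]
    norm_num
end

section
/- (Gelfond; Newman–Slater) For every nonnegative integer n and every real number x, |∏_{k=0}^{n} sin(2^k·x)| ≤ (√3/2)^n. Moreover this bound is nearly optimal: |∏_{k=0}^{n} sin(2^k·(π/3))| = (√3/2)^{n+1}. More generally (for multiplication by an integer r ≥ 1 in place of duplication), setting P_{r,n}(x) := ∏_{k=0}^{n} |sin(r^k·x)|: if r is odd then sup_{x∈ℝ} P_{r,n}(x) = 1, and if r is even then (cos(π/(2r+2)))^{n+1} ≤ sup_{x∈ℝ} P_{r,n}(x) ≤ (cos(π/(2r+2)))^n. -/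
open scoped Real

/-- `P r n x = |sin x · sin (r x) · sin (r² x) · … · sin (rⁿ x)|`. -/
noncomputable def P (r n : ℕ) (x : ℝ) : ℝ :=
  |∏ k ∈ Finset.range (n + 1), Real.sin ((r : ℝ) ^ k * x)|

/-!
For even `r` put `β = π / (2r + 2)`. If `|sin θ| ≥ cos β` then `θ = π/2 + mπ + t` with `|t| ≤ β`,
and `|sin θ| · |sin rθ| = cos t · |sin rt| ≤ cos² β`: a factor of the product exceeding `cos β` is
absorbed together with the next one, so `P r n ≤ cos^n β`. At `x = π/2 - β` one has
`r x ≡ -x (mod π)`, so every factor equals `cos β`; for odd `r`, every factor at `π/2` equals `1`.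
-/

open Finset Real

lemma abs_sin_add_int_mul_pi (x : ℝ) (m : ℤ) : |sin (x + m * π)| = |sin x| := by
  rw [sin_add_int_mul_pi, abs_mul, abs_zpow, abs_neg, abs_one, one_zpow, one_mul]

lemma abs_sin_eq_abs_sin_iff_cos_two_mul_eq {x y : ℝ} :
    |sin x| = |sin y| ↔ cos (2 * x) = cos (2 * y) := by
  rw [← sq_eq_sq_iff_abs_eq_abs, sin_sq_eq_half_sub, sin_sq_eq_half_sub]
  constructor <;> intro h <;> linarith

/-- `|sin (r y)|` is a function of `|sin y|`: both are determined by `cos (2 y)`, through the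
Chebyshev polynomial `T r`. -/
lemma abs_sin_nat_mul_eq_of_abs_sin_eq (r : ℕ) {x y : ℝ} (h : |sin x| = |sin y|) :
    |sin (r * x)| = |sin (r * y)| := by
  rw [abs_sin_eq_abs_sin_iff_cos_two_mul_eq] at h ⊢
  rw [mul_left_comm, mul_left_comm 2 (r : ℝ) y]
  simpa using congrArg (Polynomial.Chebyshev.T ℝ r).eval h

lemma abs_sin_pow_mul_eq_of_abs_sin_mul_eq {r : ℕ} {x : ℝ} (h : |sin (r * x)| = |sin x|)
    (k : ℕ) : |sin (r ^ k * x)| = |sin x| := by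
  induction k with
  | zero => simp
  | succ k ih =>
    rw [pow_succ', mul_assoc]
    exact (abs_sin_nat_mul_eq_of_abs_sin_eq r ih).trans h

lemma P_eq_prod_abs (r n : ℕ) (x : ℝ) :
    P r n x = ∏ k ∈ range (n + 1), |sin (r ^ k * x)| :=
  abs_prod _ _

lemma P_le_one (r n : ℕ) (x : ℝ) : P r n x ≤ 1 := by
  rw [P_eq_prod_abs]
  exact prod_le_one (fun _ _ ↦ abs_nonneg _) fun _ _ ↦ abs_sin_le_one _

lemma bddAbove_range_P (r n : ℕ) : BddAbove (Set.range (P r n)) :=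
  ⟨1, by rintro _ ⟨x, rfl⟩; exact P_le_one r n x⟩

lemma P_eq_pow_of_abs_sin_mul_eq {r : ℕ} {x : ℝ} (h : |sin (r * x)| = |sin x|) (n : ℕ) :
    P r n x = |sin x| ^ (n + 1) := by
  rw [P_eq_prod_abs, prod_congr rfl fun k _ ↦ abs_sin_pow_mul_eq_of_abs_sin_mul_eq h k,
    prod_const, card_range]

lemma prod_range_succ_le_pow {a : ℕ → ℝ} {c : ℝ} (ha₀ : ∀ k, 0 ≤ a k) (ha₁ : ∀ k, a k ≤ 1)
    (hc₀ : 0 ≤ c) (hc₁ : c ≤ 1) (hpair : ∀ k, c ≤ a k → a k * a (k + 1) ≤ c ^ 2) (n : ℕ) :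
    ∏ k ∈ range (n + 1), a k ≤ c ^ n := by
  suffices h : ∀ n, ∏ k ∈ range (n + 1), a k ≤ c ^ n * max c (a n) from
    (h n).trans (mul_le_of_le_one_right (by positivity) (max_le hc₁ (ha₁ n)))
  intro n
  induction n with
  | zero => simp
  | succ n ih =>
    rw [prod_range_succ]
    rcases le_total (a n) c with hle | hge
    · calc (∏ k ∈ range (n + 1), a k) * a (n + 1) ≤ c ^ n * c * a (n + 1) := by
            rw [max_eq_left hle] at ih; gcongr; exact ha₀ _
        _ ≤ c ^ (n + 1) * max c (a (n + 1)) := by rw [← pow_succ]; gcongr; exact le_max_right _ _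
    · calc (∏ k ∈ range (n + 1), a k) * a (n + 1) ≤ c ^ n * (a n * a (n + 1)) := by
            rw [max_eq_right hge] at ih; rw [← mul_assoc]; gcongr; exact ha₀ _
        _ ≤ c ^ n * c ^ 2 := by gcongr; exact hpair n hge
        _ = c ^ (n + 1) * c := by ring
        _ ≤ c ^ (n + 1) * max c (a (n + 1)) := by gcongr; exact le_max_left _ _

lemma cos_mul_abs_sin_mul_le {a t : ℝ} (ha : 1 ≤ a) (ht : |t| ≤ π / (2 * a + 2)) :
    cos t * |sin (a * t)| ≤ cos (π / (2 * a + 2)) ^ 2 := by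
  set β := π / (2 * a + 2) with hβ_def
  have hβ : (a + 1) * β = π / 2 := by rw [hβ_def]; field_simp
  have hβ₀ : 0 ≤ β := (abs_nonneg t).trans ht
  have hsin : |sin (a * t)| = sin (a * |t|) := by
    have hat : |a * t| = a * |t| := by rw [abs_mul, abs_of_nonneg (by linarith)]
    rw [abs_sin_eq_sin_abs_of_abs_le_pi (by rw [hat]; nlinarith [abs_nonneg t, pi_pos]), hat]
  have hsum : 2 * (cos |t| * sin (a * |t|)) = sin ((a + 1) * |t|) + sin ((a - 1) * |t|) := by
    rw [add_mul, sub_mul, one_mul, sin_add, sin_sub]; ring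
  -- `sin ((a - 1) β) = sin (π / 2 - 2 β) = 2 cos² β - 1`
  have hmono : sin ((a - 1) * |t|) ≤ sin ((a - 1) * β) :=
    sin_le_sin_of_le_of_le_pi_div_two (by nlinarith [abs_nonneg t, pi_pos]) (by nlinarith)
      (by nlinarith)
  rw [show (a - 1) * β = π / 2 - 2 * β by linarith, sin_pi_div_two_sub] at hmono
  rw [← cos_abs t, hsin, cos_sq β]
  linarith [sin_le_one ((a + 1) * |t|)]

lemma exists_eq_add_pi_div_two_add_int_mul_pi (θ : ℝ) :
    ∃ (t : ℝ) (m : ℤ), |t| ≤ π / 2 ∧ θ = t + π / 2 + m * π := by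
  set m := round ((θ - π / 2) / π)
  refine ⟨θ - π / 2 - m * π, m, ?_, by ring⟩
  have e : θ - π / 2 - m * π = ((θ - π / 2) / π - m) * π := by field_simp
  rw [e, abs_mul, abs_of_pos pi_pos]
  nlinarith [abs_sub_round ((θ - π / 2) / π), pi_pos]

lemma abs_sin_mul_abs_sin_nat_mul_le {r : ℕ} (hr : 0 < r) (hre : Even r) {θ : ℝ}
    (h : cos (π / (2 * r + 2)) ≤ |sin θ|) :
    |sin θ| * |sin (r * θ)| ≤ cos (π / (2 * r + 2)) ^ 2 := by
  obtain ⟨s, hs⟩ := hre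
  obtain ⟨t, m, ht, rfl⟩ := exists_eq_add_pi_div_two_add_int_mul_pi θ
  have hcos : |sin (t + π / 2 + m * π)| = cos |t| := by
    rw [abs_sin_add_int_mul_pi, sin_add_pi_div_two, cos_abs, abs_of_nonneg
      (cos_nonneg_of_neg_pi_div_two_le_of_le (neg_le_of_abs_le ht) (le_of_abs_le ht))]
  have hsin : |sin (r * (t + π / 2 + m * π))| = |sin (r * t)| := by
    rw [← abs_sin_add_int_mul_pi (r * t) (s + r * m), hs]
    push_cast
    ring_nf
  have htβ : |t| ≤ π / (2 * r + 2) := by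
    by_contra! hlt
    have := cos_lt_cos_of_nonneg_of_le_pi (by positivity) (by linarith [pi_pos]) hlt
    linarith
  rw [hcos, hsin, cos_abs]
  exact cos_mul_abs_sin_mul_le (by exact_mod_cast hr) htβ

lemma cos_pi_div_two_mul_add_two_nonneg (r : ℕ) : 0 ≤ cos (π / (2 * r + 2)) := by
  have hβ : π / (2 * r + 2) ≤ π / 2 :=
    div_le_div_of_nonneg_left pi_pos.le two_pos (by linarith [r.cast_nonneg (α := ℝ)])
  exact cos_nonneg_of_mem_Icc ⟨by linarith [pi_pos, (by positivity : 0 ≤ π / (2 * r + 2))], hβ⟩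

lemma P_le_cos_pow {r : ℕ} (hr : 0 < r) (hre : Even r) (n : ℕ) (x : ℝ) :
    P r n x ≤ cos (π / (2 * r + 2)) ^ n := by
  rw [P_eq_prod_abs]
  refine prod_range_succ_le_pow (fun _ ↦ abs_nonneg _) (fun _ ↦ abs_sin_le_one _)
    (cos_pi_div_two_mul_add_two_nonneg r) (cos_le_one _) (fun k hk ↦ ?_) n
  simpa only [pow_succ', mul_assoc] using abs_sin_mul_abs_sin_nat_mul_le hr hre hk

lemma P_pi_div_two_sub_eq_cos_pow {r : ℕ} (hre : Even r) (n : ℕ) :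
    P r n (π / 2 - π / (2 * r + 2)) = cos (π / (2 * r + 2)) ^ (n + 1) := by
  obtain ⟨s, hs⟩ := hre
  have hmul : (r : ℝ) * (π / 2 - π / (2 * r + 2)) =
      -(π / 2 - π / (2 * r + 2)) + ((s : ℤ) : ℝ) * π := by
    rw [hs]; push_cast; field_simp; ring
  rw [P_eq_pow_of_abs_sin_mul_eq (by rw [hmul, abs_sin_add_int_mul_pi, sin_neg, abs_neg]),
    sin_pi_div_two_sub, abs_of_nonneg (cos_pi_div_two_mul_add_two_nonneg r)]

lemma P_pi_div_two_of_odd {r : ℕ} (hr : Odd r) (n : ℕ) : P r n (π / 2) = 1 := by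
  obtain ⟨s, rfl⟩ := hr
  have hmul : ((2 * s + 1 : ℕ) : ℝ) * (π / 2) = π / 2 + ((s : ℤ) : ℝ) * π := by push_cast; ring
  rw [P_eq_pow_of_abs_sin_mul_eq (by rw [hmul, abs_sin_add_int_mul_pi]), sin_pi_div_two,
    abs_one, one_pow]

theorem stmt_18 :
    (∀ (n : ℕ) (x : ℝ), P 2 n x ≤ (Real.sqrt 3 / 2) ^ n) ∧
    (∀ n : ℕ, P 2 n (π / 3) = (Real.sqrt 3 / 2) ^ (n + 1)) ∧
    (∀ r n : ℕ, 0 < r → Odd r → (⨆ x : ℝ, P r n x) = 1) ∧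
    (∀ r n : ℕ, 0 < r → Even r →
      (Real.cos (π / (2 * r + 2))) ^ (n + 1) ≤ (⨆ x : ℝ, P r n x) ∧
        (⨆ x : ℝ, P r n x) ≤ (Real.cos (π / (2 * r + 2))) ^ n) := by
  have hβ : π / (2 * ((2 : ℕ) : ℝ) + 2) = π / 6 := by norm_num
  refine ⟨fun n x ↦ ?_, fun n ↦ ?_, fun r n _ hodd ↦ ?_, fun r n hr hre ↦ ⟨?_, ?_⟩⟩
  · simpa only [hβ, cos_pi_div_six] using P_le_cos_pow two_pos even_two n x
  · have := P_pi_div_two_sub_eq_cos_pow even_two n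
    rwa [hβ, cos_pi_div_six, show π / 2 - π / 6 = π / 3 by ring] at this
  · refine le_antisymm (ciSup_le (P_le_one r n)) ?_
    exact (P_pi_div_two_of_odd hodd n).symm.le.trans (le_ciSup (bddAbove_range_P r n) _)
  · exact (P_pi_div_two_sub_eq_cos_pow hre n).symm.le.trans (le_ciSup (bddAbove_range_P r n) _)
  · exact ciSup_le (P_le_cos_pow hr hre n)
end
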